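/- arXiv:2110.14854 — 2 statements merged into one kernel-verified Lean document; each statement's English description precedes it below -/
import Mathlib

section
/- Let V be a finite type, let V_l ⊆ V be a finite set (the previously labeled nodes), let Q : V → V → ℝ and θ ∈ ℝ, and define F(S) = |{v ∈ V : ∃ u ∈ V_l ∪ S, Q v u > θ}| for finite S ⊆ V. Let b ≥ 1 and let A_0 = ∅, A_1, …, A_b be finite subsets of V such that for each t < b there exists a_t ∉ A_t with A_{t+1} = A_t ∪ {a_t} and F(A_t ∪ {a_t}) ≥ F(A_t ∪ {w}) for every w ∈ V (a greedy selection). Then for every finite set S ⊆ V with |S| = b, (F(A_b) : ℝ) ≥ (1 − 1/e) · F(S), where e = exp 1. -/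
/-- Theorem 2 of RIM: the greedily selected batch node set is within a factor
`(1 − 1/e)` of the optimal set for the reliable influence maximization objective
`F(S) = |{v : ∃ u ∈ V_l ∪ S, Q v u > θ}|`. -/
theorem greedy_reliable_influence_maximization
    {V : Type*} [Fintype V] [DecidableEq V]
    (Vl : Finset V) (Q : V → V → ℝ) (θ : ℝ)
    (F : Finset V → ℕ)
    (hF : ∀ S : Finset V, F S = ({v : V | ∃ u ∈ Vl ∪ S, Q v u > θ}).ncard)
    (b : ℕ) (hb : 1 ≤ b) (A : ℕ → Finset V) (hA0 : A 0 = ∅)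
    (hgreedy : ∀ t < b, ∃ a ∉ A t,
      A (t + 1) = insert a (A t) ∧ ∀ w : V, F (insert w (A t)) ≤ F (insert a (A t)))
    (S : Finset V) (hS : S.card = b) :
    (1 - 1 / Real.exp 1) * (F S : ℝ) ≤ (F (A b) : ℝ) := by
  classical
  set act : Finset V → Finset V :=
    fun T => Finset.univ.filter (fun v => ∃ u ∈ Vl ∪ T, Q v u > θ) with hact
  have hmem : ∀ (T : Finset V) (v : V), v ∈ act T ↔ ∃ u ∈ Vl ∪ T, Q v u > θ := by
    intro T v; simp [hact]
  have hFcard : ∀ T : Finset V, F T = (act T).card := by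
    intro T
    have h1 : {v : V | ∃ u ∈ Vl ∪ T, Q v u > θ} = ↑(act T) := by
      ext v; simp [hact]
    rw [hF, h1, Set.ncard_coe_finset]
  have hmono : ∀ {T₁ T₂ : Finset V}, T₁ ⊆ T₂ → act T₁ ⊆ act T₂ := by
    intro T₁ T₂ h v hv
    rw [hmem] at hv ⊢
    obtain ⟨u, hu, hq⟩ := hv
    refine ⟨u, ?_, hq⟩
    rcases Finset.mem_union.1 hu with h1 | h1
    · exact Finset.mem_union_left _ h1
    · exact Finset.mem_union_right _ (h h1)
  have hb1 : (1:ℝ) ≤ (b:ℝ) := by exact_mod_cast hb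
  have hbpos : (0:ℝ) < (b:ℝ) := lt_of_lt_of_le one_pos hb1
  have hfrac : 0 ≤ 1 - 1/(b:ℝ) := by
    have : 1/(b:ℝ) ≤ 1 := by rw [div_le_one hbpos]; exact hb1
    linarith
  -- key greedy step inequality
  have key : ∀ t, t < b → (F S : ℝ) ≤ (F (A t) : ℝ) +
      (b:ℝ) * ((F (A (t+1)) : ℝ) - (F (A t) : ℝ)) := by
    intro t ht
    obtain ⟨a, _, hA1, hmax⟩ := hgreedy t ht
    have hcover : act (A t ∪ S) \ act (A t) ⊆
        S.biUnion (fun w => act (insert w (A t)) \ act (A t)) := by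
      intro v hv
      rw [Finset.mem_sdiff] at hv
      obtain ⟨hv1, hv2⟩ := hv
      rw [hmem] at hv1
      obtain ⟨u, hu, hq⟩ := hv1
      rcases Finset.mem_union.1 hu with h1 | h1
      · exact absurd ((hmem _ _).2 ⟨u, Finset.mem_union_left _ h1, hq⟩) hv2
      · rcases Finset.mem_union.1 h1 with h2 | h2
        · exact absurd ((hmem _ _).2 ⟨u, Finset.mem_union_right _ h2, hq⟩) hv2
        · refine Finset.mem_biUnion.2 ⟨u, h2, Finset.mem_sdiff.2 ⟨?_, hv2⟩⟩
          exact (hmem _ _).2 ⟨u, Finset.mem_union_right _ (Finset.mem_insert_self _ _), hq⟩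
    have hsub1 : act (A t) ⊆ act (A t ∪ S) := hmono Finset.subset_union_left
    have hc1 : (act (A t ∪ S) \ act (A t)).card + (act (A t)).card = (act (A t ∪ S)).card :=
      Finset.card_sdiff_add_card_eq_card hsub1
    have hc2 : (act (A t ∪ S) \ act (A t)).card ≤
        ∑ w ∈ S, (act (insert w (A t)) \ act (A t)).card :=
      le_trans (Finset.card_le_card hcover) (Finset.card_biUnion_le)
    have hterm : ∀ w ∈ S, ((act (insert w (A t)) \ act (A t)).card : ℝ) ≤
        (F (A (t+1)) : ℝ) - (F (A t) : ℝ) := by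
      intro w _
      have hsub : act (A t) ⊆ act (insert w (A t)) := hmono (Finset.subset_insert _ _)
      have hcd : (act (insert w (A t)) \ act (A t)).card
          = (act (insert w (A t))).card - (act (A t)).card := Finset.card_sdiff_of_subset hsub
      rw [hcd, Nat.cast_sub (Finset.card_le_card hsub), hA1]
      have h := hmax w
      rw [hFcard, hFcard] at h
      simp only [hFcard]
      have : ((act (insert w (A t))).card : ℝ) ≤ ((act (insert a (A t))).card : ℝ) := by
        exact_mod_cast h
      linarith
    have hmonoS : (F S : ℝ) ≤ ((act (A t ∪ S)).card : ℝ) := by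
      rw [hFcard]
      exact_mod_cast Finset.card_le_card (hmono Finset.subset_union_right)
    have hsum1 : ((act (A t ∪ S) \ act (A t)).card : ℝ) ≤
        ∑ w ∈ S, ((act (insert w (A t)) \ act (A t)).card : ℝ) := by
      push_cast
      exact_mod_cast hc2
    have hsum2 : ∑ w ∈ S, ((act (insert w (A t)) \ act (A t)).card : ℝ) ≤
        (b:ℝ) * ((F (A (t+1)) : ℝ) - (F (A t) : ℝ)) := by
      calc ∑ w ∈ S, ((act (insert w (A t)) \ act (A t)).card : ℝ)
          ≤ ∑ _w ∈ S, ((F (A (t+1)) : ℝ) - (F (A t) : ℝ)) := Finset.sum_le_sum hterm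
        _ = (S.card : ℝ) * ((F (A (t+1)) : ℝ) - (F (A t) : ℝ)) := by
            rw [Finset.sum_const, nsmul_eq_mul]
        _ = (b:ℝ) * ((F (A (t+1)) : ℝ) - (F (A t) : ℝ)) := by rw [hS]
    have hc1R : ((act (A t ∪ S) \ act (A t)).card : ℝ) + ((act (A t)).card : ℝ)
        = ((act (A t ∪ S)).card : ℝ) := by exact_mod_cast hc1
    have hFt : (F (A t) : ℝ) = ((act (A t)).card : ℝ) := by rw [hFcard]
    linarith
  -- recursion
  have hrec : ∀ t, t ≤ b → (F S : ℝ) - (F (A t) : ℝ) ≤ (1 - 1/(b:ℝ))^t * (F S : ℝ) := by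
    intro t
    induction t with
    | zero =>
        intro _
        have h0 : (0:ℝ) ≤ (F (A 0) : ℝ) := Nat.cast_nonneg _
        simp only [pow_zero, one_mul]
        linarith
    | succ n ih =>
        intro h
        have hn : n < b := h
        have h1 := key n hn
        have h2 := ih (le_of_lt hn)
        have h3 : (F S : ℝ) - (F (A (n+1)) : ℝ) ≤
            (1 - 1/(b:ℝ)) * ((F S : ℝ) - (F (A n) : ℝ)) := by
          have hb0 : (b:ℝ) ≠ 0 := ne_of_gt hbpos
          rw [← sub_nonneg]
          have hexpand : (1 - 1/(b:ℝ)) * ((F S : ℝ) - (F (A n) : ℝ))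
              - ((F S : ℝ) - (F (A (n+1)) : ℝ))
              = ((F (A n) : ℝ) + (b:ℝ) * ((F (A (n+1)) : ℝ) - (F (A n) : ℝ))
                - (F S : ℝ)) / (b:ℝ) := by
            field_simp
            ring
          rw [hexpand]
          apply div_nonneg _ (le_of_lt hbpos)
          linarith
        calc (F S : ℝ) - (F (A (n+1)) : ℝ)
            ≤ (1 - 1/(b:ℝ)) * ((F S : ℝ) - (F (A n) : ℝ)) := h3
          _ ≤ (1 - 1/(b:ℝ)) * ((1 - 1/(b:ℝ))^n * (F S : ℝ)) :=
              mul_le_mul_of_nonneg_left h2 hfrac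
          _ = (1 - 1/(b:ℝ))^(n+1) * (F S : ℝ) := by ring
  have hfin := hrec b le_rfl
  have hexp : (1 - 1/(b:ℝ))^b ≤ Real.exp (-1) := by
    have h1 : 1 - 1/(b:ℝ) ≤ Real.exp (-(1/(b:ℝ))) := by
      have := Real.add_one_le_exp (-(1/(b:ℝ)))
      linarith
    calc (1 - 1/(b:ℝ))^b ≤ (Real.exp (-(1/(b:ℝ))))^b := pow_le_pow_left₀ hfrac h1 b
      _ = Real.exp ((b:ℝ) * (-(1/(b:ℝ)))) := (Real.exp_nat_mul _ b).symm
      _ = Real.exp (-1) := by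
          congr 1
          field_simp
  have hFSnn : (0:ℝ) ≤ (F S : ℝ) := Nat.cast_nonneg _
  have hmain : (F S : ℝ) - (F (A b) : ℝ) ≤ Real.exp (-1) * (F S : ℝ) :=
    le_trans hfin (mul_le_mul_of_nonneg_right hexp hFSnn)
  have hexp1 : Real.exp (-1) = 1 / Real.exp 1 := by
    rw [Real.exp_neg]; ring
  rw [hexp1] at hmain
  have hring : (1 - 1 / Real.exp 1) * (F S : ℝ)
      = (F S : ℝ) - (1 / Real.exp 1) * (F S : ℝ) := by ring
  rw [hring]
  linarith
end

section
/- Let V be a finite type and F : Finset V → ℝ a function with F(∅) = 0 that is monotone nondecreasing (A ⊆ B implies F(A) ≤ F(B)) and submodular (for A ⊆ B and s ∉ B, F(A ∪ {s}) − F(A) ≥ F(B ∪ {s}) − F(B)). Let b ≥ 1 and let A_0 = ∅, A_1, …, A_b be finite subsets of V such that for each t < b there exists a_t ∉ A_t with A_{t+1} = A_t ∪ {a_t} and F(A_t ∪ {a_t}) ≥ F(A_t ∪ {w}) for every w ∈ V. Then for every finite set S ⊆ V with |S| = b, F(A_b) ≥ (1 − (1 − 1/b)^b) · F(S). -/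
lemma marginal_sum_bound {V : Type*} [DecidableEq V]
    (F : Finset V → ℝ)
    (hmono : ∀ A B : Finset V, A ⊆ B → F A ≤ F B)
    (hsub : ∀ A B : Finset V, A ⊆ B → ∀ s ∉ B,
      F (insert s B) - F B ≤ F (insert s A) - F A)
    (A : Finset V) (T : Finset V) :
    F (A ∪ T) - F A ≤ ∑ w ∈ T, (F (insert w A) - F A) := by
  classical
  induction T using Finset.induction with
  | empty => simp
  | @insert w T hw ih =>
    rw [Finset.sum_insert hw, Finset.union_insert]
    by_cases hwAT : w ∈ A ∪ T
    · rw [Finset.insert_eq_self.2 hwAT]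
      have h1 : (0:ℝ) ≤ F (insert w A) - F A := by
        have := hmono A (insert w A) (Finset.subset_insert _ _)
        linarith
      linarith
    · have h2 := hsub A (A ∪ T) Finset.subset_union_left w hwAT
      linarith

/-- Greedy approximation guarantee for monotone nondecreasing submodular set-function
maximization under a cardinality constraint (Nemhauser–Wolsey–Fisher), as invoked in
the proof of Theorem 2 of RIM: the greedy set `A b` satisfies
`F(A b) ≥ (1 − (1 − 1/b)^b) · F(S)` for every set `S` of size `b`. -/
theorem greedy_submodular_maximization
    {V : Type*} [Fintype V] [DecidableEq V]
    (F : Finset V → ℝ) (hF0 : F ∅ = 0)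
    (hmono : ∀ A B : Finset V, A ⊆ B → F A ≤ F B)
    (hsub : ∀ A B : Finset V, A ⊆ B → ∀ s ∉ B,
      F (insert s B) - F B ≤ F (insert s A) - F A)
    (b : ℕ) (hb : 1 ≤ b) (A : ℕ → Finset V) (hA0 : A 0 = ∅)
    (hgreedy : ∀ t < b, ∃ a ∉ A t,
      A (t + 1) = insert a (A t) ∧ ∀ w : V, F (insert w (A t)) ≤ F (insert a (A t)))
    (S : Finset V) (hS : S.card = b) :
    (1 - (1 - 1 / (b : ℝ)) ^ b) * F S ≤ F (A b) := by
  have hbpos : (0:ℝ) < (b:ℝ) := by exact_mod_cast hb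
  have hfac : (0:ℝ) ≤ 1 - 1 / (b:ℝ) := by
    have : 1 / (b:ℝ) ≤ 1 := by
      rw [div_le_one hbpos]; exact_mod_cast hb
    linarith
  -- key step inequality
  have hstep : ∀ t < b, F S - F (A (t+1)) ≤ (1 - 1/(b:ℝ)) * (F S - F (A t)) := by
    intro t ht
    obtain ⟨a, ha, hA1, hbest⟩ := hgreedy t ht
    have hms := marginal_sum_bound F hmono hsub (A t) S
    have hsum : ∑ w ∈ S, (F (insert w (A t)) - F (A t)) ≤
        (b:ℝ) * (F (A (t+1)) - F (A t)) := by
      rw [hA1]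
      calc ∑ w ∈ S, (F (insert w (A t)) - F (A t))
          ≤ ∑ _w ∈ S, (F (insert a (A t)) - F (A t)) := by
            apply Finset.sum_le_sum; intro w _; have := hbest w; linarith
        _ = (b:ℝ) * (F (insert a (A t)) - F (A t)) := by
            rw [Finset.sum_const, hS, nsmul_eq_mul]
    have hFS : F S ≤ F (A t ∪ S) := hmono S _ Finset.subset_union_right
    have key : F S - F (A t) ≤ (b:ℝ) * (F (A (t+1)) - F (A t)) := by linarith
    have hinv : (1/(b:ℝ)) * ((b:ℝ) * (F (A (t+1)) - F (A t))) = F (A (t+1)) - F (A t) := by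
      field_simp
    have h3 := mul_le_mul_of_nonneg_left key (one_div_pos.2 hbpos).le
    rw [hinv] at h3
    rw [sub_mul, one_mul]
    linarith
  -- induction
  have hFS0 : (0:ℝ) ≤ F S := by
    have := hmono ∅ S (Finset.empty_subset S); linarith
  have main : ∀ t ≤ b, F S - F (A t) ≤ (1 - 1/(b:ℝ))^t * F S := by
    intro t
    induction t with
    | zero => intro _; simp [hA0, hF0]
    | succ t ih =>
      intro ht
      have ht' : t < b := ht
      have h1 := hstep t ht'
      have h2 := ih (le_of_lt ht')
      calc F S - F (A (t+1)) ≤ (1 - 1/(b:ℝ)) * (F S - F (A t)) := h1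
        _ ≤ (1 - 1/(b:ℝ)) * ((1 - 1/(b:ℝ))^t * F S) := by
            exact mul_le_mul_of_nonneg_left h2 hfac
        _ = (1 - 1/(b:ℝ))^(t+1) * F S := by ring
  have := main b le_rfl
  linarith
end
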